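/- If X is a strongly star-Lindelöf topological space of cardinality less than the bounding number 𝔟, then X is strongly star-Hurewicz. -/

import Mathlib

open Set Filter

variable {X : Type u}

def star {X : Type u} (A : Set X) (U : Set (Set X)) : Set X :=
  ⋃₀ {u ∈ U | (u ∩ A).Nonempty}

def IsOpenCover {X : Type u} [TopologicalSpace X] (U : Set (Set X)) : Prop :=
  (∀ u ∈ U, IsOpen u) ∧ ⋃₀ U = univ

noncomputable def domNum : Cardinal :=
  sInf {c | ∃ D : Set (ℕ → ℕ), Cardinal.mk D = c ∧
    ∀ f : ℕ → ℕ, ∃ g ∈ D, ∀ᶠ n in atTop, f n ≤ g n}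

noncomputable def boundNum : Cardinal :=
  sInf {c | ∃ B : Set (ℕ → ℕ), Cardinal.mk B = c ∧
    ¬ ∃ g : ℕ → ℕ, ∀ f ∈ B, ∀ᶠ n in atTop, f n ≤ g n}

noncomputable def covMeager : Cardinal :=
  sInf {c | ∃ F : Set (ℕ → ℕ), Cardinal.mk F = c ∧
    ¬ ∃ g : ℕ → ℕ, ∀ f ∈ F, {n | g n = f n}.Infinite}

def StronglyStarLindelof (X : Type u) [TopologicalSpace X] : Prop :=
  ∀ U : Set (Set X), IsOpenCover U →
    ∃ C : Set X, C.Countable ∧ star C U = univ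

def AbsStronglyStarLindelof (X : Type u) [TopologicalSpace X] : Prop :=
  ∀ U : Set (Set X), IsOpenCover U → ∀ D : Set X, Dense D →
    ∃ C : Set X, C ⊆ D ∧ C.Countable ∧ star C U = univ

def StronglyStarMenger (X : Type u) [TopologicalSpace X] : Prop :=
  ∀ U : ℕ → Set (Set X), (∀ n, IsOpenCover (U n)) →
    ∃ F : ℕ → Finset X, ⋃ n, star (↑(F n)) (U n) = univ

def AbsStronglyStarMenger (X : Type u) [TopologicalSpace X] : Prop :=
  ∀ U : ℕ → Set (Set X), (∀ n, IsOpenCover (U n)) → ∀ D : Set X, Dense D →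
    ∃ F : ℕ → Finset X, (∀ n, ↑(F n) ⊆ D) ∧ ⋃ n, star (↑(F n)) (U n) = univ

def SelStronglyStarMenger (X : Type u) [TopologicalSpace X] : Prop :=
  ∀ U : ℕ → Set (Set X), (∀ n, IsOpenCover (U n)) →
    ∀ D : ℕ → Set X, (∀ n, Dense (D n)) →
      ∃ F : ℕ → Finset X, (∀ n, ↑(F n) ⊆ D n) ∧ ⋃ n, star (↑(F n)) (U n) = univ

def StronglyStarHurewicz (X : Type u) [TopologicalSpace X] : Prop :=
  ∀ U : ℕ → Set (Set X), (∀ n, IsOpenCover (U n)) →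
    ∃ F : ℕ → Finset X, ∀ x : X, ∀ᶠ n in atTop, x ∈ star (↑(F n)) (U n)

def SelStronglyStarHurewicz (X : Type u) [TopologicalSpace X] : Prop :=
  ∀ U : ℕ → Set (Set X), (∀ n, IsOpenCover (U n)) →
    ∀ D : ℕ → Set X, (∀ n, Dense (D n)) →
      ∃ F : ℕ → Finset X, (∀ n, ↑(F n) ⊆ D n) ∧
        ∀ x : X, ∀ᶠ n in atTop, x ∈ star (↑(F n)) (U n)

def StronglyStarRothberger (X : Type u) [TopologicalSpace X] : Prop :=
  ∀ U : ℕ → Set (Set X), (∀ n, IsOpenCover (U n)) →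
    ∃ x : ℕ → X, ⋃ n, star {x n} (U n) = univ

def SelStronglyStarRothberger (X : Type u) [TopologicalSpace X] : Prop :=
  ∀ U : ℕ → Set (Set X), (∀ n, IsOpenCover (U n)) →
    ∀ D : ℕ → Set X, (∀ n, Dense (D n)) →
      ∃ d : ℕ → X, (∀ n, d n ∈ D n) ∧ ⋃ n, star {d n} (U n) = univ

def DiscreteIn {X : Type u} [TopologicalSpace X] (C : Set X) : Prop :=
  ∀ x ∈ C, ∃ O : Set X, IsOpen O ∧ O ∩ C = {x}

def CountableExtent (X : Type u) [TopologicalSpace X] : Prop :=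
  ∀ C : Set X, IsClosed C → DiscreteIn C → C.Countable

def SelSScdOGamma (X : Type u) [TopologicalSpace X] : Prop :=
  ∀ U : ℕ → Set (Set X), (∀ n, IsOpenCover (U n)) →
    ∀ D : ℕ → Set X, (∀ n, Dense (D n)) →
      ∃ C : ℕ → Set X, (∀ n, C n ⊆ D n ∧ IsClosed (C n) ∧ DiscreteIn (C n)) ∧
        ∀ x : X, ∀ᶠ n in atTop, x ∈ star (C n) (U n)

def SelSScdOO (X : Type u) [TopologicalSpace X] : Prop :=
  ∀ U : ℕ → Set (Set X), (∀ n, IsOpenCover (U n)) →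
    ∀ D : ℕ → Set X, (∀ n, Dense (D n)) →
      ∃ C : ℕ → Set X, (∀ n, C n ⊆ D n ∧ IsClosed (C n) ∧ DiscreteIn (C n)) ∧
        ⋃ n, star (C n) (U n) = univ

def StarSigmaK (X : Type u) [TopologicalSpace X] (K : Set (Set X)) : Prop :=
  ∀ U : Set (Set X), IsOpenCover U →
    ∃ E : ℕ → Set X, (∀ m, E m ∈ K) ∧ star (⋃ m, E m) U = univ

def AbsStarSigmaK (X : Type u) [TopologicalSpace X] (K : Set (Set X)) : Prop :=
  ∀ D : Set X, Dense D → ∀ U : Set (Set X), IsOpenCover U →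
    ∃ E : ℕ → Set X, (∀ m, E m ∈ K ∧ E m ⊆ D) ∧ star (⋃ m, E m) U = univ

def AbsNbhdStarMenger (X : Type u) [TopologicalSpace X] : Prop :=
  ∀ U : ℕ → Set (Set X), (∀ n, IsOpenCover (U n)) → ∀ D : Set X, Dense D →
    ∃ F : ℕ → Finset X, (∀ n, ↑(F n) ⊆ D) ∧
      ∀ O : ℕ → Set X, (∀ n, IsOpen (O n) ∧ ↑(F n) ⊆ O n) →
        ⋃ n, star (O n) (U n) = univ

def AbsNbhdStarHurewicz (X : Type u) [TopologicalSpace X] : Prop :=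
  ∀ U : ℕ → Set (Set X), (∀ n, IsOpenCover (U n)) → ∀ D : Set X, Dense D →
    ∃ F : ℕ → Finset X, (∀ n, ↑(F n) ⊆ D) ∧
      ∀ O : ℕ → Set X, (∀ n, IsOpen (O n) ∧ ↑(F n) ⊆ O n) →
        ∀ x : X, ∀ᶠ n in atTop, x ∈ star (O n) (U n)

/-!
Enumerate the countable sets `Cₙ` given by strong star-Lindelöfness for the covers `Uₙ` as
`eₙ(0), eₙ(1), …`. Each point `x` picks, for every `n`, an index `kₓ(n)` with `x ∈ St(eₙ(kₓ(n)), Uₙ)`.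
Fewer than `𝔟` functions `kₓ` are eventually dominated by a single `g`, and then the finite sets
`Fₙ = {eₙ(0), …, eₙ(g n)}` witness the strong star-Hurewicz property.
-/

lemma mem_star_iff {A : Set X} {U : Set (Set X)} {x : X} :
    x ∈ star A U ↔ ∃ u ∈ U, (u ∩ A).Nonempty ∧ x ∈ u := by
  simp only [_root_.star, mem_sUnion, mem_ofPred_eq, and_assoc]

lemma star_mono {A B : Set X} (h : A ⊆ B) (U : Set (Set X)) : star A U ⊆ star B U :=
  sUnion_mono fun _ ⟨hu, hA⟩ => ⟨hu, hA.mono (inter_subset_inter_right _ h)⟩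

lemma star_empty (U : Set (Set X)) : star ∅ U = ∅ := by
  simp [_root_.star]

lemma star_iUnion {ι : Sort*} (A : ι → Set X) (U : Set (Set X)) :
    star (⋃ i, A i) U = ⋃ i, star (A i) U := by
  ext x
  simp only [mem_iUnion, mem_star_iff, inter_iUnion, nonempty_iUnion]
  grind

lemma StronglyStarLindelof.exists_seq_forall_mem_star [TopologicalSpace X] [Nonempty X]
    (hX : StronglyStarLindelof X) {U : Set (Set X)} (hU : IsOpenCover U) :
    ∃ e : ℕ → X, ∀ x, ∃ k, x ∈ star {e k} U := by
  obtain ⟨C, hC, hCU⟩ := hX U hU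
  have hCne : C.Nonempty := by
    by_contra hC₀
    rw [not_nonempty_iff_eq_empty.mp hC₀, star_empty] at hCU
    exact empty_ne_univ hCU
  obtain ⟨e, rfl⟩ := hC.exists_eq_range hCne
  refine ⟨e, fun x => ?_⟩
  have hx : x ∈ star (⋃ k, {e k}) U := by simp [hCU]
  simpa only [star_iUnion, mem_iUnion] using hx

lemma exists_eventually_le_of_mk_lt_boundNum {ι : Type u} (f : ι → ℕ → ℕ)
    (hι : Cardinal.mk ι < Cardinal.lift.{u} boundNum) :
    ∃ g : ℕ → ℕ, ∀ i, ∀ᶠ n in atTop, f i n ≤ g n := by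
  have hrange : Cardinal.mk (range f) < boundNum :=
    Cardinal.lift_lt.mp ((Cardinal.mk_range_le_lift.trans_eq (Cardinal.lift_uzero _)).trans_lt hι)
  by_contra hunbdd
  refine hrange.not_ge (csInf_le (OrderBot.bddBelow _) ⟨range f, rfl, ?_⟩)
  simpa only [forall_mem_range] using hunbdd

theorem stmt1 {X : Type u} [TopologicalSpace X]
    (hssl : StronglyStarLindelof X) (hcard : Cardinal.mk X < Cardinal.lift.{u} boundNum) :
    StronglyStarHurewicz X := by
  classical
  intro U hU
  rcases isEmpty_or_nonempty X with hX | hX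
  · exact ⟨fun _ => ∅, isEmptyElim⟩
  choose e he using fun n => hssl.exists_seq_forall_mem_star (hU n)
  choose k hk using fun x n => he n x
  obtain ⟨g, hg⟩ := exists_eventually_le_of_mk_lt_boundNum k hcard
  refine ⟨fun n => (Finset.range (g n + 1)).image (e n), fun x => ?_⟩
  filter_upwards [hg x] with n hn
  refine star_mono ?_ (U n) (hk x n)
  simpa using ⟨k x n, hn, rfl⟩
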